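/- arXiv:2604.27160 — 2 statements merged into one kernel-verified Lean document; each statement's English description precedes it below -/
import Mathlib

section
/- Let C > 0. Let 𝒮_C := {γ : 𝒰 → [0,∞) : Σ_{v ∈ 𝒰} C^{2|v|} γ_v < ∞}, let T↑ be defined on 𝒮_C by (T↑ γ)_u := Σ_{v ∈ 𝒰, u ⊆ v} C^{2|v|} γ_v, let ℳ be the set of completely monotone weights, let T↓ be defined on ℳ by (T↓ γ)_u := C^{−2|u|} lim_{s → ∞} (Δ_{[s] ∖ u} γ)_u, and let 𝒜 := {γ ∈ ℳ : for every u ∈ 𝒰, lim_{r → ∞} lim_{s → ∞} (Δ_{[s] ∖ [r]} γ)_u = γ_u}. Then T↑ maps 𝒮_C bijectively onto 𝒜 and its inverse is the restriction of T↓ to 𝒜; moreover T↓(ℳ) = 𝒮_C, and for every γ ∈ ℳ one has T↑(T↓ γ) ≤ γ pointwise, with equality if and only if γ ∈ 𝒜. -/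
/-!
For `u ⊆ m ⊆ n`, expanding `Δ` gives the Möbius-type identity
`(Δ_{n ∖ m} γ)_u = Σ_{u ⊆ v ⊆ m} (Δ_{n ∖ v} γ)_v`.

For `γ = T↑ f` the differences are explicit, `(Δ_v T↑f)_u = Σ_{v' ⊇ u, v' ∩ v = ∅} f_{v'}`, and
dominated convergence yields the limits defining `T↓` and `𝒜`. For completely monotone `γ` the
differences `(Δ_{[s] ∖ v} γ)_v` decrease in `s` to `L_v = C^{2|v|} (T↓ γ)_v`, so the identity with
`m = n = [r]` bounds the partial sums `Σ_{u ⊆ v ⊆ [r]} L_v` by `γ_u` (giving summability and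
`T↑ T↓ γ ≤ γ`), while with `m = [r]`, `n = [s]`, `s → ∞` it shows that these partial sums are
exactly `lim_s (Δ_{[s] ∖ [r]} γ)_u`. Letting `r → ∞`, `T↑ T↓ γ = γ` says precisely that `γ ∈ 𝒜`.
-/

open Finset Filter Topology

/-- The difference operator `Δ_v` on families indexed by finite subsets of `ℕ`:
`(Δ_v γ)_u := Σ_{w ⊆ v} (−1)^{|w|} γ_{u ∪ w}`. -/
noncomputable def Δ (v : Finset ℕ) (γ : Finset ℕ → ℝ) (u : Finset ℕ) : ℝ :=
  ∑ w ∈ v.powerset, (-1 : ℝ) ^ w.card * γ (u ∪ w)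

/-- Completely monotone weights: all iterated differences are non-negative.
(Since `Δ_∅ γ = γ`, this includes non-negativity of `γ` itself.) -/
def CM (γ : Finset ℕ → ℝ) : Prop := ∀ v u : Finset ℕ, 0 ≤ Δ v γ u

/-- The class `𝒮_C` of weights with `Σ_v C^{2|v|} γ_v < ∞`. -/
def SC (C : ℝ) (γ : Finset ℕ → ℝ) : Prop :=
  (∀ u, 0 ≤ γ u) ∧ Summable fun v : Finset ℕ => C ^ (2 * v.card) * γ v

/-- The class `𝒜` of completely monotone weights with
`lim_r lim_s (Δ_{[s] ∖ [r]} γ)_u = γ_u` for every `u`. -/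
def Acond (γ : Finset ℕ → ℝ) : Prop :=
  CM γ ∧ ∀ u : Finset ℕ, ∃ g : ℕ → ℝ,
    (∀ r : ℕ, Filter.Tendsto (fun s : ℕ => Δ (Finset.range s \ Finset.range r) γ u)
      Filter.atTop (nhds (g r))) ∧
    Filter.Tendsto g Filter.atTop (nhds (γ u))

lemma Δ_empty (γ : Finset ℕ → ℝ) (u : Finset ℕ) : Δ ∅ γ u = γ u := by
  simp [Δ]

lemma Δ_insert (γ : Finset ℕ → ℝ) {n : ℕ} {v : Finset ℕ} (hn : n ∉ v) (u : Finset ℕ) :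
    Δ (insert n v) γ u = Δ v γ u - Δ v γ (insert n u) := by
  rw [Δ, Δ, Δ, sum_powerset_insert hn, sub_eq_add_neg, ← sum_neg_distrib]
  congr 1
  refine sum_congr rfl fun w hw => ?_
  rw [card_insert_of_notMem fun h => hn (mem_powerset.1 hw h), union_insert, insert_union,
    pow_succ]
  ring

lemma Δ_eq_zero_of_mem (γ : Finset ℕ → ℝ) {n : ℕ} {v u : Finset ℕ} (hv : n ∈ v) (hu : n ∈ u) :
    Δ v γ u = 0 := by
  rw [← insert_erase hv, Δ_insert γ (notMem_erase n v), insert_eq_of_mem hu, sub_self]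

lemma Δ_union (γ : Finset ℕ → ℝ) {a b : Finset ℕ} (h : Disjoint a b) (u : Finset ℕ) :
    Δ (a ∪ b) γ u = Δ a (Δ b γ) u := by
  induction a using Finset.induction_on generalizing u with
  | empty => simp [Δ_empty]
  | @insert n a hna ih =>
    have hab := h.mono_left (subset_insert n a)
    have hnab : n ∉ a ∪ b := by
      simp [hna, disjoint_left.1 h (mem_insert_self n a)]
    rw [insert_union, Δ_insert γ hnab, Δ_insert _ hna, ih hab, ih hab]

lemma sum_powerset_Δ_sdiff (γ : Finset ℕ → ℝ) (m u : Finset ℕ) :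
    ∑ w ∈ m.powerset, Δ (m \ w) γ (u ∪ w) = γ u := by
  induction m using Finset.induction_on generalizing u with
  | empty => simp [Δ_empty]
  | @insert n m hnm ih =>
    have hsplit : ∀ w ∈ m.powerset, Δ (insert n m \ w) γ (u ∪ w)
        = Δ (m \ w) γ (u ∪ w) - Δ (insert n m \ insert n w) γ (u ∪ insert n w) := by
      intro w hw
      have hnw : n ∉ w := fun h => hnm (mem_powerset.1 hw h)
      rw [insert_sdiff_of_notMem _ hnw, Δ_insert γ (fun h => hnm (mem_sdiff.1 h).1),
        insert_sdiff_insert, sdiff_insert_of_notMem hnm, union_insert]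
    rw [sum_powerset_insert hnm, sum_congr rfl hsplit, sum_sub_distrib, sub_add_cancel, ih]

lemma sum_Icc_Δ_sdiff (γ : Finset ℕ → ℝ) {u m n : Finset ℕ} (hum : u ⊆ m) (hmn : m ⊆ n) :
    ∑ v ∈ Icc u m, Δ (n \ v) γ v = Δ (n \ m) γ u := by
  have hinj : Set.InjOn (u ∪ ·) ((m \ u).powerset : Set (Finset ℕ)) := fun w₁ h₁ w₂ h₂ he => by
    rw [← union_sdiff_cancel_left (disjoint_of_subset_right (mem_powerset.1 h₁) disjoint_sdiff),
      ← union_sdiff_cancel_left (disjoint_of_subset_right (mem_powerset.1 h₂) disjoint_sdiff)]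
    exact congrArg (· \ u) he
  rw [Icc_eq_image_powerset hum, sum_image hinj, ← sum_powerset_Δ_sdiff (Δ (n \ m) γ) (m \ u) u]
  refine sum_congr rfl fun w hw => ?_
  have hw : w ⊆ m \ u := mem_powerset.1 hw
  rw [← Δ_union γ (disjoint_sdiff.mono_left (sdiff_subset.trans sdiff_subset))]
  congr 1
  ext x
  have := @hum x; have := @hmn x; have := @hw x
  simp only [mem_union, Finset.mem_sdiff] at *
  tauto

lemma sum_Icc_Δ_sdiff_self (γ : Finset ℕ → ℝ) {u m : Finset ℕ} (hum : u ⊆ m) :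
    ∑ v ∈ Icc u m, Δ (m \ v) γ v = γ u := by
  rw [sum_Icc_Δ_sdiff γ hum subset_rfl, sdiff_self, bot_eq_empty, Δ_empty]

lemma CM.Δ_antitone {γ : Finset ℕ → ℝ} (hγ : CM γ) (u : Finset ℕ) :
    Antitone fun v => Δ v γ u := by
  intro v v' hvv'
  dsimp only
  rw [← union_sdiff_of_subset hvv', union_comm]
  induction v' \ v using Finset.induction_on with
  | empty => rw [empty_union]
  | @insert n a _ ih =>
    rw [insert_union]
    by_cases hn : n ∈ a ∪ v
    · rwa [insert_eq_of_mem hn]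
    · rw [Δ_insert γ hn]
      linarith [hγ (a ∪ v) (insert n u)]

lemma sum_powerset_neg_one_pow_card_mul_ite (v u v' : Finset ℕ) (c : ℝ) :
    ∑ w ∈ v.powerset, (-1 : ℝ) ^ w.card * (if u ∪ w ⊆ v' then c else 0)
      = if u ⊆ v' ∧ Disjoint v v' then c else 0 := by
  simp only [union_subset_iff, ite_and]
  by_cases hu : u ⊆ v'
  · have hfilter : v.powerset.filter (· ⊆ v') = (v ∩ v').powerset := by
      ext w
      simp only [mem_filter, mem_powerset, subset_inter_iff]
    have halt : ∑ w ∈ (v ∩ v').powerset, (-1 : ℝ) ^ w.card = if v ∩ v' = ∅ then 1 else 0 := by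
      exact_mod_cast sum_powerset_neg_one_pow_card (x := v ∩ v')
    simp only [hu, if_true, mul_ite, mul_zero]
    rw [← sum_filter, hfilter, ← sum_mul, halt]
    simp only [← disjoint_iff_inter_eq_empty, ite_mul, one_mul, zero_mul]
  · simp [hu]

lemma Summable.ite_zero {ι : Type*} {f : ι → ℝ} (hf : Summable f) (p : ι → Prop)
    [DecidablePred p] : Summable fun i => if p i then f i else 0 :=
  hf.abs.of_norm_bounded fun i => by split_ifs <;> simp

lemma tendsto_sum_powerset_range {f : Finset ℕ → ℝ} (hf : Summable f) :
    Tendsto (fun r => ∑ v ∈ (range r).powerset, f v) atTop (𝓝 (∑' v, f v)) := by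
  refine hf.hasSum.comp (tendsto_atTop_finset_of_monotone ?_ fun v => ?_)
  · exact fun r r' h => powerset_mono.2 (range_mono h)
  · obtain ⟨r, hr⟩ := v.exists_nat_subset_range
    exact ⟨r, mem_powerset.2 hr⟩

lemma summable_of_sum_powerset_range_le {f : Finset ℕ → ℝ} {c : ℝ} (hf : 0 ≤ f)
    (h : ∀ r, ∑ v ∈ (range r).powerset, f v ≤ c) : Summable f := by
  refine summable_of_sum_le (c := c) hf fun A => ?_
  obtain ⟨r, hr⟩ := (A.biUnion id).exists_nat_subset_range
  refine le_trans (sum_le_sum_of_subset_of_nonneg (fun v hv => ?_) fun v _ _ => hf v) (h r)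
  exact mem_powerset.2 ((subset_biUnion_of_mem id hv).trans hr)

/-- `T↑ γ = upperSum (C^{2|·|} γ)`. -/
noncomputable def upperSum (f : Finset ℕ → ℝ) (u : Finset ℕ) : ℝ :=
  ∑' v, if u ⊆ v then f v else 0

section upperSum

variable {f : Finset ℕ → ℝ}

lemma tendsto_sum_Icc_range_upperSum (hf : Summable f) (u : Finset ℕ) :
    Tendsto (fun r => ∑ v ∈ Icc u (range r), f v) atTop (𝓝 (upperSum f u)) := by
  simp only [Icc_eq_filter_powerset, sum_filter]
  exact tendsto_sum_powerset_range (hf.ite_zero _)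

lemma Δ_upperSum (hf : Summable f) (v u : Finset ℕ) :
    Δ v (upperSum f) u = ∑' v', if u ⊆ v' ∧ Disjoint v v' then f v' else 0 := by
  simp only [Δ, upperSum, ← tsum_mul_left]
  rw [← Summable.tsum_finsetSum fun w _ => (hf.ite_zero _).mul_left _]
  exact tsum_congr fun v' => sum_powerset_neg_one_pow_card_mul_ite v u v' (f v')

lemma cm_upperSum (hf0 : 0 ≤ f) (hf : Summable f) : CM (upperSum f) := fun v u => by
  rw [Δ_upperSum hf]
  exact tsum_nonneg fun v' => by split_ifs; exacts [hf0 v', le_rfl]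

lemma tendsto_Δ_range_sdiff_upperSum (hf : Summable f) (u t : Finset ℕ) :
    Tendsto (fun s => Δ (range s \ t) (upperSum f) u) atTop (𝓝 (∑ v ∈ Icc u t, f v)) := by
  have hlim : ∑ v ∈ Icc u t, f v = ∑' v, if u ⊆ v ∧ v ⊆ t then f v else 0 := by
    rw [tsum_eq_sum (s := Icc u t) fun v hv => if_neg (by simpa using hv)]
    exact sum_congr rfl fun v hv => (if_pos (mem_Icc.1 hv)).symm
  simp only [Δ_upperSum hf, hlim]
  refine tendsto_tsum_of_dominated_convergence hf.abs (fun v => ?_) (.of_forall fun s v => ?_)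
  · obtain ⟨n, hn⟩ := v.exists_nat_subset_range
    refine tendsto_const_nhds.congr' ?_
    filter_upwards [eventually_ge_atTop n] with s hs
    have hvs : v ⊆ range s := hn.trans (range_mono hs)
    have hdisj : Disjoint (range s \ t) v ↔ v ⊆ t := by
      refine ⟨fun h x hx => ?_, fun h => disjoint_sdiff_self_left.mono_right h⟩
      by_contra hxt
      exact disjoint_left.1 h (mem_sdiff.2 ⟨hvs hx, hxt⟩) hx
    simp only [hdisj]
  · split_ifs <;> simp

lemma acond_upperSum (hf0 : 0 ≤ f) (hf : Summable f) : Acond (upperSum f) :=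
  ⟨cm_upperSum hf0 hf, fun u => ⟨fun r => ∑ v ∈ Icc u (range r), f v,
    fun r => tendsto_Δ_range_sdiff_upperSum hf u (range r), tendsto_sum_Icc_range_upperSum hf u⟩⟩

end upperSum

/-- For completely monotone `γ`, `TendstoΔ γ L` means `L = C^{2|·|} T↓ γ`. -/
def TendstoΔ (γ L : Finset ℕ → ℝ) : Prop :=
  ∀ u, Tendsto (fun s => Δ (range s \ u) γ u) atTop (𝓝 (L u))

section TendstoΔ

variable {γ L : Finset ℕ → ℝ}

lemma TendstoΔ.tendsto_Δ_range_sdiff_range (hL : TendstoΔ γ L) (u : Finset ℕ) (r : ℕ) :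
    Tendsto (fun s => Δ (range s \ range r) γ u) atTop (𝓝 (∑ v ∈ Icc u (range r), L v)) := by
  by_cases hur : u ⊆ range r
  · refine (tendsto_finsetSum _ fun v _ => hL v).congr' ?_
    filter_upwards [eventually_ge_atTop r] with s hrs
    exact sum_Icc_Δ_sdiff γ hur (range_mono hrs)
  · obtain ⟨n, hnu, hnr⟩ := not_subset.1 hur
    rw [Icc_eq_empty_iff.2 hur, sum_empty]
    refine tendsto_const_nhds.congr' ?_
    filter_upwards [eventually_gt_atTop n] with s hns
    exact (Δ_eq_zero_of_mem γ (mem_sdiff.2 ⟨mem_range.2 hns, hnr⟩) hnu).symm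

lemma TendstoΔ.le_Δ (hL : TendstoΔ γ L) (hγ : CM γ) (u : Finset ℕ) (s : ℕ) :
    L u ≤ Δ (range s \ u) γ u :=
  ((hγ.Δ_antitone u).comp_monotone fun _ _ h => sdiff_subset_sdiff (range_mono h) subset_rfl
    ).le_of_tendsto (hL u) s

lemma TendstoΔ.nonneg (hL : TendstoΔ γ L) (hγ : CM γ) : 0 ≤ L := fun u =>
  ge_of_tendsto' (hL u) fun _ => hγ _ u

lemma TendstoΔ.sum_Icc_le (hL : TendstoΔ γ L) (hγ : CM γ) (u : Finset ℕ) (r : ℕ) :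
    ∑ v ∈ Icc u (range r), L v ≤ γ u := by
  by_cases hur : u ⊆ range r
  · rw [← sum_Icc_Δ_sdiff_self γ hur]
    exact sum_le_sum fun v _ => hL.le_Δ hγ v r
  · rw [Icc_eq_empty_iff.2 hur, sum_empty, ← Δ_empty γ u]
    exact hγ ∅ u

lemma TendstoΔ.summable (hL : TendstoΔ γ L) (hγ : CM γ) : Summable L :=
  summable_of_sum_powerset_range_le (hL.nonneg hγ) fun r => by
    simpa [Icc_eq_filter_powerset] using hL.sum_Icc_le hγ ∅ r

lemma TendstoΔ.upperSum_le (hL : TendstoΔ γ L) (hγ : CM γ) (u : Finset ℕ) :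
    upperSum L u ≤ γ u :=
  le_of_tendsto' (tendsto_sum_Icc_range_upperSum (hL.summable hγ) u) (hL.sum_Icc_le hγ u)

lemma TendstoΔ.upperSum_eq_iff (hL : TendstoΔ γ L) (hγ : CM γ) :
    upperSum L = γ ↔ Acond γ := by
  have hlim u := tendsto_sum_Icc_range_upperSum (hL.summable hγ) u
  constructor
  · intro heq
    exact ⟨hγ, fun u => ⟨_, hL.tendsto_Δ_range_sdiff_range u, heq ▸ hlim u⟩⟩
  · rintro ⟨-, hA⟩
    funext u
    obtain ⟨g, hg, hgu⟩ := hA u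
    have hg_eq : g = fun r => ∑ v ∈ Icc u (range r), L v :=
      funext fun r => tendsto_nhds_unique (hg r) (hL.tendsto_Δ_range_sdiff_range u r)
    exact tendsto_nhds_unique (hlim u) (hg_eq ▸ hgu)

end TendstoΔ

theorem stmt10 (C : ℝ) (hC : 0 < C)
    (Tup Td : (Finset ℕ → ℝ) → Finset ℕ → ℝ)
    (hTup : ∀ γ u, Tup γ u = ∑' v : Finset ℕ, if u ⊆ v then C ^ (2 * v.card) * γ v else 0)
    (hTd : ∀ γ, CM γ → ∀ u : Finset ℕ,
      Filter.Tendsto (fun s : ℕ => Δ (Finset.range s \ u) γ u) Filter.atTop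
        (nhds (C ^ (2 * u.card) * Td γ u))) :
    (∀ γ, SC C γ → Acond (Tup γ)) ∧
    (∀ γ, SC C γ → Td (Tup γ) = γ) ∧
    (∀ γ, Acond γ → SC C (Td γ) ∧ Tup (Td γ) = γ) ∧
    (∀ γ, CM γ → SC C (Td γ)) ∧
    (∀ γ, SC C γ → ∃ δ, CM δ ∧ Td δ = γ) ∧
    (∀ γ, CM γ → (∀ u, Tup (Td γ) u ≤ γ u) ∧ (Tup (Td γ) = γ ↔ Acond γ)) := by
  have hTup_eq γ : Tup γ = upperSum fun v => C ^ (2 * v.card) * γ v := funext (hTup γ)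
  have hpow (u : Finset ℕ) : 0 < C ^ (2 * u.card) := pow_pos hC _
  have up γ (hγ : SC C γ) : Acond (Tup γ) ∧ Td (Tup γ) = γ := by
    obtain ⟨hγ0, hγ⟩ := hγ
    have hA : Acond (Tup γ) :=
      hTup_eq γ ▸ acond_upperSum (fun v => mul_nonneg (hpow v).le (hγ0 v)) hγ
    refine ⟨hA, funext fun u => mul_left_cancel₀ (hpow u).ne' ?_⟩
    refine tendsto_nhds_unique (hTd _ hA.1 u) ?_
    simpa [hTup_eq γ, Icc_self] using tendsto_Δ_range_sdiff_upperSum hγ u u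
  have down γ (hγ : CM γ) :
      SC C (Td γ) ∧ (∀ u, Tup (Td γ) u ≤ γ u) ∧ (Tup (Td γ) = γ ↔ Acond γ) := by
    have hL : TendstoΔ γ fun u => C ^ (2 * u.card) * Td γ u := hTd γ hγ
    rw [hTup_eq]
    exact ⟨⟨fun u => nonneg_of_mul_nonneg_right (hL.nonneg hγ u) (hpow u), hL.summable hγ⟩,
      hL.upperSum_le hγ, hL.upperSum_eq_iff hγ⟩
  exact ⟨fun γ h => (up γ h).1, fun γ h => (up γ h).2,
    fun γ hA => ⟨(down γ hA.1).1, (down γ hA.1).2.2.2 hA⟩, fun γ h => (down γ h).1,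
    fun γ h => ⟨Tup γ, (up γ h).1.1, (up γ h).2⟩, fun γ h => (down γ h).2⟩
end

section
/- Let C > 0 and let γ be POD weights, γ_u = Γ_{|u|} Π_{j ∈ u} γ_j, with (γ_j)_{j ∈ ℕ} non-increasing and non-negative and 0 ≤ Γ_k ≤ C_a (k!)^a for constants a, C_a > 0. Assume Γ_1 > 0, p > a, and Σ_{j ∈ ℕ} γ_j < ∞, where p := sup{τ > 0 : Σ_j γ_j^{1/τ} < ∞}. Then Σ_{v ∈ 𝒰} C^{2|v|} γ_v < ∞, γ↑ := T↑ γ is well-defined by (T↑ γ)_u := Σ_{v ∈ 𝒰, u ⊆ v} C^{2|v|} γ_v, and decay(γ↑) = decay(γ) = p, where for a family a = (a_v)_{v ∈ 𝒱} of non-negative reals over a countable index set, decay(a) := sup{τ > 0 : Σ_{v ∈ 𝒱} a_v^{1/τ} < ∞} (with sup ∅ := 0). -/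
open Finset

/-- The decay of a family of non-negative reals:
`decay(a) := sup {τ > 0 : Σ_v a_v^{1/τ} < ∞}` (with `sup ∅ := 0`),
taking values in `[0, ∞]`. -/
noncomputable def decay {V : Type*} (f : V → ℝ) : ENNReal :=
  ⨆ (t : ℝ) (_ : 0 < t ∧ Summable fun v => f v ^ (1 / t)), ENNReal.ofReal t

/-!
A POD weight `Γ_{|u|} ∏_{j ∈ u} b_j` is summable over finite sets as soon as
`∑_k Γ_k (∑_j b_j)^k / k!` converges, because `k! e_k(b) ≤ (∑_j b_j)^k`. Raising to the power
`1/τ` keeps the POD form, and for `τ > a` the bound `Γ_k^{1/τ} ≤ C_a^{1/τ} (k!)^{a/τ}` makes that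
series converge whenever `∑_j γ_j^{1/τ} < ∞`. As `C^{2|v|} γ_v` is the POD weight of
`b_j = C² γ_j`, this gives summability and `decay(γ) ≥ p`; singletons give `decay(γ) ≤ p`.
For `γ↑`, subadditivity of `x ↦ x^{1/τ}` (`τ ≥ 1`) bounds `∑_u (γ↑_u)^{1/τ}` by
`∑_v 2^{|v|} (C^{2|v|} γ_v)^{1/τ}`, again a POD sum, while `γ↑ ≥ C^{2|·|} γ` gives the other
inequality.
-/

open Filter Topology

section Rpow

variable {V : Type*} {f : V → ℝ} {r : ℝ}

lemma summable_rpow_one_div_max {s t : ℝ} (hs : Summable fun v => f v ^ (1 / s))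
    (ht : Summable fun v => f v ^ (1 / t)) : Summable fun v => f v ^ (1 / max s t) := by
  rcases max_choice s t with h | h <;> rw [h] <;> assumption

/-- Summable terms are eventually `< 1`, where raising the exponent only decreases them. -/
lemma summable_rpow_of_le (hf0 : ∀ v, 0 ≤ f v) {e e' : ℝ} (he : 0 < e) (hee' : e ≤ e')
    (hf : Summable fun v => f v ^ e) : Summable fun v => f v ^ e' := by
  refine hf.of_norm_bounded_eventually ?_
  filter_upwards [hf.tendsto_cofinite_zero.eventually_lt_const one_pos] with v hv
  rw [Real.norm_of_nonneg (Real.rpow_nonneg (hf0 v) _)]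
  have hv1 : f v ≤ 1 := by
    by_contra! h1
    exact (Real.one_lt_rpow h1 he).not_gt hv
  rcases (hf0 v).eq_or_lt with h0 | h0
  · rw [← h0, Real.zero_rpow he.ne', Real.zero_rpow (he.trans_le hee').ne']
  · exact Real.rpow_le_rpow_of_exponent_ge h0 hv1 hee'

lemma rpow_sum_le_sum_rpow (s : Finset V) (hf0 : ∀ i, 0 ≤ f i) (hr0 : 0 < r) (hr1 : r ≤ 1) :
    (∑ i ∈ s, f i) ^ r ≤ ∑ i ∈ s, f i ^ r := by
  classical
  induction s using Finset.induction_on with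
  | empty => simp [Real.zero_rpow hr0.ne']
  | insert i s hi ih =>
    rw [sum_insert hi, sum_insert hi]
    exact (Real.rpow_add_le_add_rpow (hf0 i) (sum_nonneg fun j _ => hf0 j) hr0.le hr1).trans
      (add_le_add le_rfl ih)

lemma rpow_tsum_le_tsum_rpow (hf0 : ∀ i, 0 ≤ f i) (hf : Summable f) (hr0 : 0 < r) (hr1 : r ≤ 1)
    (hfr : Summable fun i => f i ^ r) : (∑' i, f i) ^ r ≤ ∑' i, f i ^ r := by
  have hlim : Tendsto (fun s : Finset V => (∑ i ∈ s, f i) ^ r) atTop (𝓝 ((∑' i, f i) ^ r)) :=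
    ((Real.continuousAt_rpow_const _ _ (Or.inr hr0.le)).tendsto).comp hf.hasSum
  exact le_of_tendsto' hlim fun s => (rpow_sum_le_sum_rpow s hf0 hr0 hr1).trans
    (hfr.sum_le_tsum s fun i _ => Real.rpow_nonneg (hf0 i) r)

end Rpow

section Decay

variable {V W : Type*}

lemma ofReal_le_decay {f : V → ℝ} {t : ℝ} (ht : 0 < t) (hf : Summable fun v => f v ^ (1 / t)) :
    ENNReal.ofReal t ≤ decay f :=
  le_iSup₂ (f := fun t (_ : 0 < t ∧ Summable fun v => f v ^ (1 / t)) => ENNReal.ofReal t) t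
    ⟨ht, hf⟩

lemma exists_summable_rpow_of_ofReal_lt_decay {f : V → ℝ} {a : ℝ}
    (ha : ENNReal.ofReal a < decay f) : ∃ t, 0 < t ∧ a < t ∧ Summable fun v => f v ^ (1 / t) := by
  obtain ⟨t, ht⟩ := lt_iSup_iff.mp ha
  obtain ⟨⟨ht0, hft⟩, hat⟩ := lt_iSup_iff.mp ht
  exact ⟨t, ht0, (ENNReal.ofReal_lt_ofReal_iff'.mp hat).1, hft⟩

lemma exists_one_le_summable_rpow {f : V → ℝ} {a : ℝ} (ha : ENNReal.ofReal a < decay f)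
    (hf : Summable f) : ∃ t, a < t ∧ 1 ≤ t ∧ Summable fun v => f v ^ (1 / t) := by
  obtain ⟨t, -, hat, hft⟩ := exists_summable_rpow_of_ofReal_lt_decay ha
  exact ⟨max t 1, hat.trans_le (le_max_left _ _), le_max_right _ _,
    summable_rpow_one_div_max hft (by simpa using hf)⟩

/-- Any admissible `t` for `f` is dominated by the admissible `max t t₁`. -/
lemma decay_le_decay_of_summable_rpow {f : V → ℝ} {g : W → ℝ} {t₁ : ℝ}
    (hf : Summable fun v => f v ^ (1 / t₁))
    (h : ∀ t, t₁ ≤ t → (Summable fun v => f v ^ (1 / t)) → Summable fun w => g w ^ (1 / t)) :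
    decay f ≤ decay g := by
  refine iSup₂_le fun t ⟨ht, hft⟩ => ?_
  calc ENNReal.ofReal t ≤ ENNReal.ofReal (max t t₁) := ENNReal.ofReal_le_ofReal (le_max_left _ _)
    _ ≤ decay g := ofReal_le_decay (ht.trans_le (le_max_left _ _))
          (h _ (le_max_right _ _) (summable_rpow_one_div_max hft hf))

lemma decay_le_decay_comp {f : W → ℝ} {e : V → W} (he : Function.Injective e) :
    decay f ≤ decay (f ∘ e) :=
  iSup₂_le fun _ ⟨ht, hft⟩ => ofReal_le_decay ht (hft.comp_injective he)

lemma decay_le_decay_of_le {f g : V → ℝ} (hf : ∀ v, 0 ≤ f v) (hfg : ∀ v, f v ≤ g v) :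
    decay g ≤ decay f :=
  iSup₂_le fun t ⟨ht, hgt⟩ => ofReal_le_decay ht <| hgt.of_nonneg_of_le
    (fun v => Real.rpow_nonneg (hf v) _) fun v => Real.rpow_le_rpow (hf v) (hfg v) (by positivity)

lemma decay_const_mul {f : V → ℝ} (hf : ∀ v, 0 ≤ f v) {c : ℝ} (hc : 0 < c) :
    decay (fun v => c * f v) = decay f := by
  have hsummable (t : ℝ) : (Summable fun v => (c * f v) ^ (1 / t)) ↔
      Summable fun v => f v ^ (1 / t) := by
    simp_rw [Real.mul_rpow hc.le (hf _)]
    exact summable_mul_left_iff (Real.rpow_pos_of_pos hc _).ne'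
  simp only [decay, hsummable]

end Decay

section POD

variable {ι : Type*}

def podWeight (Γ : ℕ → ℝ) (b : ι → ℝ) (u : Finset ι) : ℝ := Γ u.card * ∏ j ∈ u, b j

lemma podWeight_nonneg {Γ : ℕ → ℝ} {b : ι → ℝ} (hΓ : ∀ k, 0 ≤ Γ k) (hb : ∀ j, 0 ≤ b j)
    (u : Finset ι) : 0 ≤ podWeight Γ b u :=
  mul_nonneg (hΓ _) (prod_nonneg fun j _ => hb j)

lemma podWeight_const_mul (Γ : ℕ → ℝ) (b : ι → ℝ) (c : ℝ) (u : Finset ι) :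
    podWeight Γ (fun j => c * b j) u = c ^ u.card * podWeight Γ b u := by
  simp only [podWeight, prod_mul_distrib, prod_const]
  ring

lemma podWeight_rpow {Γ : ℕ → ℝ} {b : ι → ℝ} (hΓ : ∀ k, 0 ≤ Γ k) (hb : ∀ j, 0 ≤ b j) (r : ℝ)
    (u : Finset ι) : podWeight Γ b u ^ r = podWeight (fun k => Γ k ^ r) (fun j => b j ^ r) u := by
  rw [podWeight, podWeight, Real.mul_rpow (hΓ _) (prod_nonneg fun j _ => hb j),
    Real.finsetProd_rpow u _ fun j _ => hb j]

/-- Each monomial of `e_k(b)` occurs in the multinomial expansion of `(∑ b)^k` with coefficient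
`k!`, as the term of the indicator of its index set. -/
lemma factorial_mul_sum_powersetCard_prod_le [DecidableEq ι] {b : ι → ℝ} (hb : ∀ j, 0 ≤ b j)
    (N : Finset ι) (k : ℕ) :
    (k.factorial : ℝ) * ∑ u ∈ N.powersetCard k, ∏ j ∈ u, b j ≤ (∑ j ∈ N, b j) ^ k := by
  classical
  set e : Finset ι → ι → ℕ := fun u i => if i ∈ u then 1 else 0
  have he_sum : ∀ u ∈ N.powersetCard k, ∑ i ∈ N, e u i = k := by
    intro u hu
    obtain ⟨huN, rfl⟩ := mem_powersetCard.mp hu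
    simp [e, sum_ite_mem, inter_eq_right.mpr huN]
  have he_inj : Set.InjOn e (N.powersetCard k) := by
    intro u _ v _ huv
    ext i
    have := congrFun huv i
    by_cases hiu : i ∈ u <;> by_cases hiv : i ∈ v <;> simp_all [e]
  have he_maps : ∀ u ∈ N.powersetCard k, e u ∈ N.piAntidiag k := by
    intro u hu
    refine mem_piAntidiag.mpr ⟨he_sum u hu, fun i hi => ?_⟩
    by_contra hiN
    have hiu : i ∉ u := fun hiu => hiN ((mem_powersetCard.mp hu).1 hiu)
    simp [e, hiu] at hi
  have he_term : ∀ u ∈ N.powersetCard k,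
      (Nat.multinomial N (e u) : ℝ) * ∏ i ∈ N, b i ^ e u i = k.factorial * ∏ j ∈ u, b j := by
    intro u hu
    have hfact : ∏ i ∈ N, (e u i).factorial = 1 :=
      prod_eq_one fun i _ => by by_cases hiu : i ∈ u <;> simp [e, hiu]
    have hmult : Nat.multinomial N (e u) = k.factorial := by
      simpa [hfact, he_sum u hu] using Nat.multinomial_spec N (e u)
    rw [hmult, ← prod_subset (mem_powersetCard.mp hu).1 fun i _ hiu => by simp [e, hiu]]
    exact congrArg _ (prod_congr rfl fun i hiu => by simp [e, hiu])
  rw [sum_pow_eq_sum_piAntidiag, mul_sum, ← sum_congr rfl he_term,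
    ← sum_image (f := fun f => (Nat.multinomial N f : ℝ) * ∏ i ∈ N, b i ^ f i) he_inj]
  refine sum_le_sum_of_subset_of_nonneg (image_subset_iff.mpr he_maps) fun f _ _ => ?_
  have := prod_nonneg fun i (_ : i ∈ N) => pow_nonneg (hb i) (f i)
  positivity

end POD

/-- Ratio test: consecutive terms have ratio `(k + 1) ^ (α - 1) x → 0`. -/
lemma summable_factorial_rpow_mul_pow_div_factorial {α : ℝ} (hα : α < 1) {x : ℝ} (hx : 0 ≤ x) :
    Summable fun k : ℕ => (k.factorial : ℝ) ^ α * x ^ k / k.factorial := by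
  have hfac (k : ℕ) : (0 : ℝ) < k.factorial := by positivity
  have hterm (k : ℕ) : (k.factorial : ℝ) ^ α * x ^ k / k.factorial =
      (k.factorial : ℝ) ^ (α - 1) * x ^ k := by
    rw [Real.rpow_sub (hfac k), Real.rpow_one]
    ring
  simp_rw [hterm]
  have hratio : Tendsto (fun k : ℕ => ((k : ℝ) + 1) ^ (α - 1) * x) atTop (𝓝 0) := by
    have := (tendsto_rpow_neg_atTop (y := 1 - α) (by linarith)).comp
      (tendsto_atTop_add_const_right atTop 1 tendsto_natCast_atTop_atTop)
    simpa [neg_sub] using this.mul_const x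
  refine summable_of_ratio_norm_eventually_le (r := 1 / 2) (by norm_num) ?_
  filter_upwards [hratio.eventually_lt_const (by norm_num : (0 : ℝ) < 1 / 2)] with k hk
  have hsucc : ((k + 1).factorial : ℝ) ^ (α - 1) * x ^ (k + 1) =
      (((k : ℝ) + 1) ^ (α - 1) * x) * ((k.factorial : ℝ) ^ (α - 1) * x ^ k) := by
    rw [Nat.factorial_succ, Nat.cast_mul, Real.mul_rpow (by positivity) (hfac k).le]
    push_cast
    ring
  have hnonneg (n : ℕ) : 0 ≤ (n.factorial : ℝ) ^ (α - 1) * x ^ n := by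
    have := hfac n; positivity
  rw [Real.norm_of_nonneg (hnonneg _), Real.norm_of_nonneg (hnonneg _), hsucc]
  exact mul_le_mul_of_nonneg_right hk.le (hnonneg k)

section PODSummable

variable {ι : Type*} [DecidableEq ι] {Γ : ℕ → ℝ} {a Ca : ℝ} {b : ι → ℝ}

lemma sum_prod_le_tsum_pow_div_factorial (hb0 : ∀ j, 0 ≤ b j) (hb : Summable b)
    {S : Finset (Finset ι)} {k : ℕ} (hS : ∀ u ∈ S, u.card = k) :
    ∑ u ∈ S, ∏ j ∈ u, b j ≤ (∑' j, b j) ^ k / k.factorial := by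
  set N := S.sup id
  have hSN : S ⊆ N.powersetCard k := fun u hu =>
    mem_powersetCard.mpr ⟨le_sup (f := id) hu, hS u hu⟩
  rw [le_div_iff₀ (by positivity), mul_comm]
  calc (k.factorial : ℝ) * ∑ u ∈ S, ∏ j ∈ u, b j
      ≤ k.factorial * ∑ u ∈ N.powersetCard k, ∏ j ∈ u, b j :=
        mul_le_mul_of_nonneg_left (sum_le_sum_of_subset_of_nonneg hSN
          fun u _ _ => prod_nonneg fun j _ => hb0 j) (by positivity)
    _ ≤ (∑ j ∈ N, b j) ^ k := factorial_mul_sum_powersetCard_prod_le hb0 N k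
    _ ≤ (∑' j, b j) ^ k := by
        gcongr
        exacts [sum_nonneg fun j _ => hb0 j, hb.sum_le_tsum N fun j _ => hb0 j]

lemma summable_podWeight_of_summable_mul_pow_div_factorial (hΓ0 : ∀ k, 0 ≤ Γ k)
    (hb0 : ∀ j, 0 ≤ b j) (hb : Summable b) (hΓ : Summable fun k => Γ k * (∑' j, b j) ^ k / k.factorial) :
    Summable (podWeight Γ b) := by
  refine summable_of_sum_le (c := ∑' k, Γ k * (∑' j, b j) ^ k / k.factorial)
    (podWeight_nonneg hΓ0 hb0) fun S => ?_
  rw [← sum_fiberwise_of_maps_to fun u hu => mem_image_of_mem card hu]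
  calc ∑ k ∈ S.image card, ∑ u ∈ S with u.card = k, podWeight Γ b u
      = ∑ k ∈ S.image card, Γ k * ∑ u ∈ S with u.card = k, ∏ j ∈ u, b j := by
        refine sum_congr rfl fun k _ => ?_
        rw [mul_sum]
        exact sum_congr rfl fun u hu => by rw [podWeight, (mem_filter.mp hu).2]
    _ ≤ ∑ k ∈ S.image card, Γ k * ((∑' j, b j) ^ k / k.factorial) := by
        gcongr with k
        · exact hΓ0 k
        · exact sum_prod_le_tsum_pow_div_factorial hb0 hb fun u hu => (mem_filter.mp hu).2
    _ ≤ ∑' k, Γ k * (∑' j, b j) ^ k / k.factorial := by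
        simp_rw [← mul_div_assoc]
        have hs0 : 0 ≤ ∑' j, b j := tsum_nonneg hb0
        exact hΓ.sum_le_tsum _ fun k _ => by have := hΓ0 k; positivity

lemma summable_podWeight (hΓ0 : ∀ k, 0 ≤ Γ k) (hΓ : ∀ k : ℕ, Γ k ≤ Ca * (k.factorial : ℝ) ^ a)
    (ha : a < 1) (hb0 : ∀ j, 0 ≤ b j) (hb : Summable b) :
    Summable (podWeight Γ b) := by
  have hs0 : 0 ≤ ∑' j, b j := tsum_nonneg hb0
  refine summable_podWeight_of_summable_mul_pow_div_factorial hΓ0 hb0 hb ?_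
  refine ((summable_factorial_rpow_mul_pow_div_factorial ha hs0).mul_left Ca).of_nonneg_of_le
    (fun k => by have := hΓ0 k; positivity) fun k => ?_
  rw [← mul_div_assoc, ← mul_assoc]
  gcongr
  exact hΓ k

lemma summable_podWeight_rpow (hΓ0 : ∀ k, 0 ≤ Γ k)
    (hΓ : ∀ k : ℕ, Γ k ≤ Ca * (k.factorial : ℝ) ^ a) {t : ℝ} (ht : 0 < t) (hat : a < t)
    (hb0 : ∀ j, 0 ≤ b j) (hb : Summable fun j => b j ^ (1 / t)) :
    Summable fun u => podWeight Γ b u ^ (1 / t) := by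
  have hCa : 0 ≤ Ca := by simpa using (hΓ0 0).trans (hΓ 0)
  have hΓt (k : ℕ) : Γ k ^ (1 / t) ≤ Ca ^ (1 / t) * (k.factorial : ℝ) ^ (a / t) := by
    calc Γ k ^ (1 / t) ≤ (Ca * (k.factorial : ℝ) ^ a) ^ (1 / t) := by gcongr; exacts [hΓ0 k, hΓ k]
      _ = Ca ^ (1 / t) * (k.factorial : ℝ) ^ (a / t) := by
        rw [Real.mul_rpow hCa (by positivity), ← Real.rpow_mul (by positivity), mul_one_div]
  simp_rw [podWeight_rpow hΓ0 hb0]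
  exact summable_podWeight (fun k => Real.rpow_nonneg (hΓ0 k) _) hΓt ((div_lt_one ht).mpr hat)
    (fun j => Real.rpow_nonneg (hb0 j) _) hb

end PODSummable

section SupersetSum

variable {ι : Type*} [DecidableEq ι] {x : Finset ι → ℝ}

/-- The paper's `T↑`, with the factor `C ^ (2 * |v|)` absorbed into `x`. -/
noncomputable def supersetSum (x : Finset ι → ℝ) (u : Finset ι) : ℝ :=
  ∑' v, if u ⊆ v then x v else 0

lemma summable_ite_subset (hx0 : ∀ v, 0 ≤ x v) (hx : Summable x) (u : Finset ι) :
    Summable fun v => if u ⊆ v then x v else 0 :=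
  hx.of_nonneg_of_le (fun v => ite_nonneg (hx0 v) le_rfl) fun v => by split_ifs <;> simp [hx0]

lemma le_supersetSum (hx0 : ∀ v, 0 ≤ x v) (hx : Summable x) (u : Finset ι) :
    x u ≤ supersetSum x u := by
  simpa [supersetSum] using
    (summable_ite_subset hx0 hx u).le_tsum u fun v _ => ite_nonneg (hx0 v) le_rfl

/-- Each `v` lies above at most `2 ^ |v|` sets `u`. -/
lemma summable_supersetSum (hx0 : ∀ v, 0 ≤ x v) (hx : Summable fun v => 2 ^ v.card * x v) :
    Summable (supersetSum x) := by
  have hx' : Summable x := hx.of_nonneg_of_le hx0 fun v =>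
    le_mul_of_one_le_left (hx0 v) (one_le_pow₀ one_le_two)
  refine summable_of_sum_le (c := ∑' v, 2 ^ v.card * x v)
    (fun u => tsum_nonneg fun v => ite_nonneg (hx0 v) le_rfl) fun S => ?_
  calc ∑ u ∈ S, supersetSum x u = ∑' v, ∑ u ∈ S, if u ⊆ v then x v else 0 :=
        (Summable.tsum_finsetSum fun u _ => summable_ite_subset hx0 hx' u).symm
    _ ≤ ∑' v, 2 ^ v.card * x v := by
        refine (summable_sum fun u _ => summable_ite_subset hx0 hx' u).tsum_le_tsum (fun v => ?_) hx
        rw [sum_ite, sum_const_zero, add_zero, sum_const, nsmul_eq_mul]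
        gcongr
        · exact hx0 v
        · exact_mod_cast (card_le_card fun u hu => mem_powerset.mpr (mem_filter.mp hu).2).trans
            (card_powerset v).le

lemma summable_supersetSum_rpow (hx0 : ∀ v, 0 ≤ x v) (hx : Summable x) {r : ℝ} (hr0 : 0 < r)
    (hr1 : r ≤ 1) (hxr : Summable fun v => 2 ^ v.card * x v ^ r) :
    Summable fun u => supersetSum x u ^ r := by
  have hxr0 (v : Finset ι) : 0 ≤ x v ^ r := Real.rpow_nonneg (hx0 v) r
  have hxr' : Summable fun v => x v ^ r := hxr.of_nonneg_of_le hxr0 fun v =>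
    le_mul_of_one_le_left (hxr0 v) (one_le_pow₀ one_le_two)
  refine (summable_supersetSum hxr0 hxr).of_nonneg_of_le
    (fun u => Real.rpow_nonneg (tsum_nonneg fun v => ite_nonneg (hx0 v) le_rfl) r) fun u => ?_
  have hite (v : Finset ι) : (if u ⊆ v then x v else 0) ^ r = if u ⊆ v then x v ^ r else 0 := by
    split_ifs <;> simp [Real.zero_rpow hr0.ne']
  calc supersetSum x u ^ r ≤ ∑' v, (if u ⊆ v then x v else 0) ^ r :=
        rpow_tsum_le_tsum_rpow (fun v => ite_nonneg (hx0 v) le_rfl) (summable_ite_subset hx0 hx u)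
          hr0 hr1 (by simpa only [hite] using summable_ite_subset hxr0 hxr' u)
    _ = supersetSum (fun v => x v ^ r) u := tsum_congr hite

end SupersetSum

section PODDecay

variable {ι : Type*} [DecidableEq ι] {Γ : ℕ → ℝ} {a Ca : ℝ} {b : ι → ℝ}

lemma summable_podWeight_of_ofReal_lt_decay (hΓ0 : ∀ k, 0 ≤ Γ k)
    (hΓ : ∀ k : ℕ, Γ k ≤ Ca * (k.factorial : ℝ) ^ a) (hb0 : ∀ j, 0 ≤ b j) (hb : Summable b)
    (ha : ENNReal.ofReal a < decay b) : Summable (podWeight Γ b) := by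
  obtain ⟨t, hat, ht1, hbt⟩ := exists_one_le_summable_rpow ha hb
  simpa using summable_rpow_of_le (podWeight_nonneg hΓ0 hb0) (by positivity)
    ((div_le_one (by positivity)).mpr ht1)
    (summable_podWeight_rpow hΓ0 hΓ (by positivity) hat hb0 hbt)

lemma decay_podWeight (hΓ0 : ∀ k, 0 ≤ Γ k) (hΓ : ∀ k : ℕ, Γ k ≤ Ca * (k.factorial : ℝ) ^ a)
    (hΓ1 : 0 < Γ 1) (hb0 : ∀ j, 0 ≤ b j) (ha : ENNReal.ofReal a < decay b) :
    decay (podWeight Γ b) = decay b := by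
  refine le_antisymm ?_ ?_
  · calc decay (podWeight Γ b) ≤ decay (podWeight Γ b ∘ singleton) :=
          decay_le_decay_comp singleton_injective
      _ = decay fun j => Γ 1 * b j := by simp [podWeight, Function.comp_def]
      _ = decay b := decay_const_mul hb0 hΓ1
  · obtain ⟨t₁, ht₁, hat₁, hbt₁⟩ := exists_summable_rpow_of_ofReal_lt_decay ha
    exact decay_le_decay_of_summable_rpow hbt₁ fun t ht hbt =>
      summable_podWeight_rpow hΓ0 hΓ (by linarith) (by linarith) hb0 hbt

lemma decay_supersetSum_podWeight (hΓ0 : ∀ k, 0 ≤ Γ k)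
    (hΓ : ∀ k : ℕ, Γ k ≤ Ca * (k.factorial : ℝ) ^ a) (hΓ1 : 0 < Γ 1) (hb0 : ∀ j, 0 ≤ b j)
    (hb : Summable b) (ha : ENNReal.ofReal a < decay b) :
    decay (supersetSum (podWeight Γ b)) = decay b := by
  have hw0 := podWeight_nonneg hΓ0 hb0
  have hw := summable_podWeight_of_ofReal_lt_decay hΓ0 hΓ hb0 hb ha
  refine le_antisymm ?_ ?_
  · rw [← decay_podWeight hΓ0 hΓ hΓ1 hb0 ha]
    exact decay_le_decay_of_le hw0 (le_supersetSum hw0 hw)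
  obtain ⟨t₁, hat₁, ht₁, hbt₁⟩ := exists_one_le_summable_rpow ha hb
  refine decay_le_decay_of_summable_rpow hbt₁ fun t ht hbt => ?_
  have ht0 : 0 < t := by linarith
  have h2 (v : Finset ι) : podWeight Γ (fun j => 2 ^ t * b j) v ^ (1 / t) =
      2 ^ v.card * podWeight Γ b v ^ (1 / t) := by
    rw [podWeight_const_mul, Real.mul_rpow (by positivity) (hw0 v),
      ← Real.rpow_pow_comm (by positivity), one_div, Real.rpow_rpow_inv zero_le_two ht0.ne']
  have h2b : Summable fun j => (2 ^ t * b j) ^ (1 / t) := by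
    simpa only [Real.mul_rpow (by positivity : (0 : ℝ) ≤ 2 ^ t) (hb0 _)] using hbt.mul_left _
  refine summable_supersetSum_rpow hw0 hw (by positivity) ((div_le_one ht0).mpr (by linarith)) ?_
  simpa only [h2] using summable_podWeight_rpow hΓ0 hΓ ht0 (by linarith)
    (fun j => by have := hb0 j; positivity) h2b

end PODDecay

theorem stmt19_general (C : ℝ) (hC : 0 < C) (γseq : ℕ → ℝ) (Γ : ℕ → ℝ) (a Ca : ℝ)
    (hnn : ∀ j, 0 ≤ γseq j) (hΓnn : ∀ k, 0 ≤ Γ k)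
    (hΓ : ∀ k : ℕ, Γ k ≤ Ca * (k.factorial : ℝ) ^ a)
    (hΓ1 : 0 < Γ 1)
    (hp : ENNReal.ofReal a < decay γseq)
    (hsumj : Summable γseq)
    (γ : Finset ℕ → ℝ) (hγ : ∀ u, γ u = Γ u.card * ∏ j ∈ u, γseq j)
    (γup : Finset ℕ → ℝ)
    (hγup : ∀ u, γup u = ∑' v : Finset ℕ, if u ⊆ v then C ^ (2 * v.card) * γ v else 0) :
    (Summable fun v : Finset ℕ => C ^ (2 * v.card) * γ v) ∧
    decay γup = decay γ ∧ decay γ = decay γseq := by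
  set b : ℕ → ℝ := fun j => C ^ 2 * γseq j
  have hb0 (j : ℕ) : 0 ≤ b j := by have := hnn j; positivity
  have hdecay_b : decay b = decay γseq := decay_const_mul hnn (by positivity)
  have hγ' : γ = podWeight Γ γseq := funext hγ
  have hw : (fun v : Finset ℕ => C ^ (2 * v.card) * γ v) = podWeight Γ b := by
    funext v
    rw [podWeight_const_mul, hγ', pow_mul]
  have hγup' : γup = supersetSum (podWeight Γ b) := by
    funext u
    rw [hγup, ← hw]
    rfl
  have hb : Summable b := hsumj.mul_left _
  have hpb : ENNReal.ofReal a < decay b := hdecay_b ▸ hp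
  have hdecay_γ : decay γ = decay γseq := hγ' ▸ decay_podWeight hΓnn hΓ hΓ1 hnn hp
  refine ⟨hw ▸ summable_podWeight_of_ofReal_lt_decay hΓnn hΓ hb0 hb hpb, ?_,
    hdecay_γ⟩
  rw [hdecay_γ, ← hdecay_b, hγup']
  exact decay_supersetSum_podWeight hΓnn hΓ hΓ1 hb0 hb hpb

theorem stmt19 (C : ℝ) (hC : 0 < C) (γseq : ℕ → ℝ) (Γ : ℕ → ℝ) (a Ca : ℝ)
    (hmono : Antitone γseq) (hnn : ∀ j, 0 ≤ γseq j) (hΓnn : ∀ k, 0 ≤ Γ k)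
    (ha : 0 < a) (hCa : 0 < Ca) (hΓ : ∀ k : ℕ, Γ k ≤ Ca * (k.factorial : ℝ) ^ a)
    (hΓ1 : 0 < Γ 1)
    (hp : ENNReal.ofReal a < decay γseq)
    (hsumj : Summable γseq)
    (γ : Finset ℕ → ℝ) (hγ : ∀ u, γ u = Γ u.card * ∏ j ∈ u, γseq j)
    (γup : Finset ℕ → ℝ)
    (hγup : ∀ u, γup u = ∑' v : Finset ℕ, if u ⊆ v then C ^ (2 * v.card) * γ v else 0) :
    (Summable fun v : Finset ℕ => C ^ (2 * v.card) * γ v) ∧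
    decay γup = decay γ ∧ decay γ = decay γseq :=
  stmt19_general C hC γseq Γ a Ca hnn hΓnn hΓ hΓ1 hp hsumj γ hγ γup hγup
end
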